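/- The odd-indexed Markov–Pell polynomials satisfy the three-term recurrence R_{2k+1} = (x^2+y^2)·(x^2+y^2+z^2)·R_{2k−1} − x^2 y^2 z^4·R_{2k−3} for every k ≥ 2 (with R_1 = 1, R_3 = x^4 + 2x^2 y^2 + y^4 + x^2 z^2), which is exactly the Vieta recurrence satisfied by the numerators of the Markov polynomials M_{k/(k+1)}. -/
import Mathlib


open MvPolynomial

/-- The Markov–Pell polynomials `R n ∈ ℤ[x,y,z]` (with `x = X 0`, `y = X 1`, `z = X 2`),
defined by `R 0 = 0`, `R 1 = 1`, and for `k ≥ 1`,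
`R (2k) = (x²+y²)·R (2k-1) + y²z²·R (2k-2)` and
`R (2k+1) = (x²+y²)·R (2k) + x²z²·R (2k-1)`.
(Here `n + 2` is even iff `n` is even, whence the choice of `y` or `x` below.) -/
noncomputable def pellR : ℕ → MvPolynomial (Fin 3) ℤ
  | 0 => 0
  | 1 => 1
  | (n + 2) => (X 0 ^ 2 + X 1 ^ 2) * pellR (n + 1)
      + (if n % 2 = 0 then X 1 else X 0) ^ 2 * X 2 ^ 2 * pellR n

lemma pellR_add_two (n : ℕ) : pellR (n + 2) = (X 0 ^ 2 + X 1 ^ 2) * pellR (n + 1)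
      + (if n % 2 = 0 then X 1 else X 0) ^ 2 * X 2 ^ 2 * pellR n := rfl

lemma pell_key (m : ℕ) : pellR (2 * m + 5) =
    (X 0 ^ 2 + X 1 ^ 2) * (X 0 ^ 2 + X 1 ^ 2 + X 2 ^ 2) * pellR (2 * m + 3)
      - X 0 ^ 2 * X 1 ^ 2 * X 2 ^ 4 * pellR (2 * m + 1) := by
  have h1 : pellR (2 * m + 5) = pellR ((2 * m + 3) + 2) := by ring_nf
  have h2 : pellR (2 * m + 4) = pellR ((2 * m + 2) + 2) := by ring_nf
  have h3 : pellR (2 * m + 3) = pellR ((2 * m + 1) + 2) := by ring_nf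
  rw [h1, pellR_add_two, if_neg (by omega),
    show (2 * m + 3) + 1 = 2 * m + 4 from by ring, h2, pellR_add_two,
    if_pos (by omega), show (2 * m + 2) + 1 = 2 * m + 3 from by ring,
    show 2 * m + 2 = (2 * m + 1) + 1 from by ring]
  have h4 : pellR ((2 * m + 1) + 2) = (X 0 ^ 2 + X 1 ^ 2) * pellR ((2 * m + 1) + 1)
      + X 0 ^ 2 * X 2 ^ 2 * pellR (2 * m + 1) := by
    rw [pellR_add_two, if_neg (by omega)]
  rw [h3, h4]
  ring

/-- The odd-indexed Markov–Pell polynomials satisfy the three-term Vieta recurrence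
`R (2k+1) = (x²+y²)(x²+y²+z²)·R (2k-1) - x²y²z⁴·R (2k-3)` for every `k ≥ 2`,
with `R 1 = 1` and `R 3 = x⁴ + 2x²y² + y⁴ + x²z²`. -/
theorem pell_three_term :
    pellR 1 = 1 ∧
    pellR 3 = X 0 ^ 4 + 2 * X 0 ^ 2 * X 1 ^ 2 + X 1 ^ 4 + X 0 ^ 2 * X 2 ^ 2 ∧
    ∀ k : ℕ, 2 ≤ k →
      pellR (2 * k + 1) =
        (X 0 ^ 2 + X 1 ^ 2) * (X 0 ^ 2 + X 1 ^ 2 + X 2 ^ 2) * pellR (2 * k - 1)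
          - X 0 ^ 2 * X 1 ^ 2 * X 2 ^ 4 * pellR (2 * k - 3) := by
  refine ⟨rfl, ?_, ?_⟩
  · show ((X 0 ^ 2 + X 1 ^ 2) * ((X 0 ^ 2 + X 1 ^ 2) * 1
      + (if (0:ℕ) % 2 = 0 then X 1 else X 0) ^ 2 * X 2 ^ 2 * 0)
      + (if (1:ℕ) % 2 = 0 then X 1 else X 0) ^ 2 * X 2 ^ 2 * 1 : MvPolynomial (Fin 3) ℤ) = _
    simp only [if_pos rfl, if_neg (by omega : ¬ (1:ℕ) % 2 = 0)]
    ring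
  · intro k hk
    obtain ⟨m, rfl⟩ : ∃ m, k = m + 2 := ⟨k - 2, by omega⟩
    have e1 : 2 * (m + 2) + 1 = 2 * m + 5 := by ring
    have e2 : 2 * (m + 2) - 1 = 2 * m + 3 := by omega
    have e3 : 2 * (m + 2) - 3 = 2 * m + 1 := by omega
    rw [e1, e2, e3, pell_key]
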